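/- arXiv:0905.0739 — 3 statements merged into one kernel-verified Lean document; each statement's English description precedes it below -/
import Mathlib

section
/- Let (X,d) be a compact metric space, f : X → X continuous, and φ : X → ℝ continuous. The sequence (1/n)S_nφ converges uniformly to a constant c if and only if φ lies in the closure (in the sup norm) of the set of functions cohomologous to c, i.e., the closure of {c + ψ∘f − ψ : ψ ∈ C(X)}. -/
/-! If `φ = c + ψ ∘ f - ψ`, the Birkhoff averages of `φ` are `c + (ψ ∘ f^[n] - ψ) / n`, which tend
to `c` uniformly. Averaging is a contraction for the sup norm, so the set of `φ` whose averages
converge uniformly to `c` is closed and hence contains the closure of `Cob(X, f, c)`. Conversely,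
`ψ = -(1/N) ∑_{n<N} S_n φ` gives `φ - (c + ψ ∘ f - ψ) = S_N φ / N - c`, since the differences
`S_n φ ∘ f - S_n φ = φ ∘ f^[n] - φ` telescope; this is uniformly small for suitable `N`. -/

open Filter Finset Function

section Algebra

variable {R α M : Type*} [DivisionSemiring R] [AddCommGroup M] [Module R M]

theorem birkhoffSum_apply_comp_sub (f : α → α) (ψ : α → M) (n : ℕ) (x : α) :
    birkhoffSum f (fun y => ψ (f y) - ψ y) n x = ψ (f^[n] x) - ψ x := by
  simpa [birkhoffSum, ← iterate_succ_apply' f] using sum_range_sub (fun k => ψ (f^[k] x)) n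

theorem birkhoffAverage_const_add_comp_sub {n : ℕ} (hn : (n : R) ≠ 0) (f : α → α) (c : M)
    (ψ : α → M) (x : α) :
    birkhoffAverage R f (fun y => c + (ψ (f y) - ψ y)) n x =
      c + (n : R)⁻¹ • (ψ (f^[n] x) - ψ x) := by
  rw [show (fun y => c + (ψ (f y) - ψ y)) = (fun _ => c) + fun y => ψ (f y) - ψ y from rfl,
    birkhoffAverage_add, Pi.add_apply, Pi.add_apply, birkhoffAverage_of_comp_eq R rfl hn,
    birkhoffAverage, birkhoffSum_apply_comp_sub]

variable (R) in
def birkhoffTransfer (f : α → α) (g : α → M) (N : ℕ) (x : α) : M :=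
  -((N : R)⁻¹ • ∑ n ∈ range N, birkhoffSum f g n x)

theorem birkhoffTransfer_apply_sub {N : ℕ} (hN : (N : R) ≠ 0) (f : α → α) (g : α → M) (x : α) :
    birkhoffTransfer R f g N (f x) - birkhoffTransfer R f g N x =
      g x - birkhoffAverage R f g N x := by
  have htel : ∑ n ∈ range N, (birkhoffSum f g n (f x) - birkhoffSum f g n x) =
      birkhoffSum f g N x - N • g x := by
    simp only [birkhoffSum_apply_sub_birkhoffSum, sum_sub_distrib, sum_const, card_range]
    rfl
  rw [birkhoffTransfer, birkhoffTransfer, neg_sub_neg, ← smul_sub, ← neg_sub, ← sum_sub_distrib,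
    htel, smul_neg, smul_sub, ← Nat.cast_smul_eq_nsmul R, inv_smul_smul₀ hN, neg_sub,
    birkhoffAverage]

theorem Continuous.birkhoffTransfer [TopologicalSpace α] [TopologicalSpace M]
    [IsTopologicalAddGroup M] [ContinuousConstSMul R M] {f : α → α} {g : α → M}
    (hf : Continuous f) (hg : Continuous g) (N : ℕ) :
    Continuous (birkhoffTransfer R f g N) :=
  ((continuous_finsetSum _ fun _ _ =>
    continuous_finsetSum _ fun k _ => hg.comp (hf.iterate k)).const_smul _).neg

end Algebra

theorem dist_birkhoffAverage_le_of_forall_dist_le {α E : Type*} [NormedAddCommGroup E]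
    [NormedSpace ℝ E] {f : α → α} {g h : α → E} {C : ℝ} (hC : ∀ x, dist (g x) (h x) ≤ C)
    (n : ℕ) (x : α) :
    dist (birkhoffAverage ℝ f g n x) (birkhoffAverage ℝ f h n x) ≤ C := by
  calc dist (birkhoffAverage ℝ f g n x) (birkhoffAverage ℝ f h n x)
      = (n : ℝ)⁻¹ * dist (birkhoffSum f g n x) (birkhoffSum f h n x) := by
        simp [birkhoffAverage, dist_smul₀]
    _ ≤ (n : ℝ)⁻¹ * (n * C) := by
        gcongr
        exact (dist_sum_sum_le _ _ _).trans
          ((sum_le_sum fun k _ => hC (f^[k] x)).trans_eq (by simp))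
    _ ≤ C := by
        rcases eq_or_ne n 0 with rfl | hn
        · simpa using dist_nonneg.trans (hC x)
        · rw [inv_mul_cancel_left₀ (by exact_mod_cast hn)]

namespace ContinuousMap

variable {X E : Type*} [TopologicalSpace X] [NormedAddCommGroup E] [NormedSpace ℝ E]

/-- `Cob(X, f, c)`. -/
def cohomologousToConst (f : C(X, X)) (c : E) : Set C(X, E) :=
  {χ | ∃ ψ : C(X, E), χ = const X c + ψ.comp f - ψ}

variable [CompactSpace X]

theorem tendstoUniformly_birkhoffAverage_of_mem_cohomologousToConst {f : C(X, X)} {c : E}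
    {χ : C(X, E)} (hχ : χ ∈ cohomologousToConst f c) :
    TendstoUniformly (birkhoffAverage ℝ f χ) (fun _ => c) atTop := by
  obtain ⟨ψ, rfl⟩ := hχ
  have hcoe : ⇑(const X c + ψ.comp f - ψ) = fun y => c + (ψ (f y) - ψ y) := by
    ext y; simp [add_sub_assoc]
  have hlim : Tendsto (fun n : ℕ => (n : ℝ)⁻¹ * (2 * ‖ψ‖)) atTop (nhds 0) := by
    simpa using (tendsto_inv_atTop_nhds_zero_nat (𝕜 := ℝ)).mul_const (2 * ‖ψ‖)
  rw [Metric.tendstoUniformly_iff]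
  intro ε hε
  filter_upwards [eventually_ne_atTop 0, hlim.eventually (gt_mem_nhds hε)] with n hn hsmall x
  rw [hcoe, birkhoffAverage_const_add_comp_sub (Nat.cast_ne_zero.2 hn), dist_self_add_right,
    norm_smul, norm_inv, RCLike.norm_natCast]
  calc (n : ℝ)⁻¹ * ‖ψ (f^[n] x) - ψ x‖ ≤ (n : ℝ)⁻¹ * (2 * ‖ψ‖) := by
        gcongr
        linarith [norm_sub_le (ψ (f^[n] x)) (ψ x), ψ.norm_coe_le_norm (f^[n] x),
          ψ.norm_coe_le_norm x]
    _ < ε := hsmall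

theorem isClosed_setOf_tendstoUniformly_birkhoffAverage (f : X → X) (c : E) :
    IsClosed {g : C(X, E) | TendstoUniformly (birkhoffAverage ℝ f g) (fun _ => c) atTop} := by
  refine isClosed_of_closure_subset fun g hg => Metric.tendstoUniformly_iff.2 fun ε hε => ?_
  obtain ⟨h, hh, hgh⟩ := Metric.mem_closure_iff.mp hg (ε / 2) (half_pos hε)
  filter_upwards [Metric.tendstoUniformly_iff.mp hh (ε / 2) (half_pos hε)] with n hn x
  calc dist c (birkhoffAverage ℝ f g n x)
      ≤ dist c (birkhoffAverage ℝ f h n x) +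
          dist (birkhoffAverage ℝ f h n x) (birkhoffAverage ℝ f g n x) := dist_triangle _ _ _
    _ < ε / 2 + ε / 2 :=
        add_lt_add (hn x) ((dist_birkhoffAverage_le_of_forall_dist_le
          (fun y => h.dist_apply_le_dist y) n x).trans_lt (by rwa [dist_comm]))
    _ = ε := add_halves ε

theorem mem_closure_cohomologousToConst_of_tendstoUniformly {f : C(X, X)} {c : E} {g : C(X, E)}
    (hg : TendstoUniformly (birkhoffAverage ℝ f g) (fun _ => c) atTop) :
    g ∈ closure (cohomologousToConst f c) := by
  refine Metric.mem_closure_iff.2 fun ε hε => ?_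
  obtain ⟨N, hN, hN0⟩ :=
    ((Metric.tendstoUniformly_iff.1 hg ε hε).and (eventually_ne_atTop 0)).exists
  let ψ : C(X, E) := ⟨birkhoffTransfer ℝ f g N, f.continuous.birkhoffTransfer g.continuous N⟩
  refine ⟨const X c + ψ.comp f - ψ, ⟨ψ, rfl⟩, (dist_lt_iff hε).2 fun x => ?_⟩
  have hψ := birkhoffTransfer_apply_sub (R := ℝ) (Nat.cast_ne_zero.2 hN0) f g x
  have hx : g x - (c + (ψ (f x) - ψ x)) = birkhoffAverage ℝ f g N x - c := by
    simp only [ψ, coe_mk, hψ]; abel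
  simpa [dist_eq_norm, add_sub_assoc, hx, norm_sub_rev] using hN x

theorem tendstoUniformly_birkhoffAverage_iff_mem_closure {f : C(X, X)} {c : E} {g : C(X, E)} :
    TendstoUniformly (birkhoffAverage ℝ f g) (fun _ => c) atTop ↔
      g ∈ closure (cohomologousToConst f c) :=
  ⟨mem_closure_cohomologousToConst_of_tendstoUniformly, fun hg =>
    closure_minimal (fun _ => tendstoUniformly_birkhoffAverage_of_mem_cohomologousToConst)
      (isClosed_setOf_tendstoUniformly_birkhoffAverage f c) hg⟩

end ContinuousMap

/-- On a compact metric space, `(1/n) S_n φ` converges uniformly to the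
constant `c` iff `φ` lies in the sup-norm closure of
`Cob(X,f,c) = {c + ψ∘f − ψ : ψ ∈ C(X)}`. -/
theorem stmt2 {X : Type*} [MetricSpace X] [CompactSpace X]
    (f : X → X) (hf : Continuous f) (φ : C(X, ℝ)) (c : ℝ) :
    TendstoUniformly (fun (n : ℕ) (x : X) =>
        (∑ i ∈ Finset.range n, φ (f^[i] x)) / n) (fun _ => c) atTop
      ↔ φ ∈ closure {χ : C(X, ℝ) |
          ∃ ψ : C(X, ℝ), χ = ContinuousMap.const X c + ψ.comp ⟨f, hf⟩ - ψ} := by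
  have hA : (fun (n : ℕ) (x : X) => (∑ i ∈ Finset.range n, φ (f^[i] x)) / n) =
      birkhoffAverage ℝ f φ := by
    funext n x
    simp [birkhoffAverage, birkhoffSum, div_eq_inv_mul]
  rw [hA]
  exact ContinuousMap.tendstoUniformly_birkhoffAverage_iff_mem_closure (f := ⟨f, hf⟩)
end

section
/- Let μ be an ergodic f-invariant Borel probability measure on a compact metric space X, let ξ be a finite Borel partition with h_μ(f,ξ) finite, let δ > 0 and let U be an open set with μ(U) ≤ δ, and let Z ⊆ X with μ(Z) > 0. Then there exist a Borel set A ⊆ Z with μ(A) ≥ μ(Z) − δ and N ∈ ℕ such that for all x ∈ A and n ≥ N: (1) #{0 ≤ l ≤ n−1 : f^l x ∈ U} ≤ 2δn, and (2) μ(C_{ξ_n}(x)) ≤ exp(−(h_μ(f,ξ) − δ)n). -/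
/-!
The visits to `U` are counted by the Birkhoff sums of `1_U`, whose mean `μ U ≤ δ` lies below
`2δ`. Only a one-sided ergodic theorem is needed, and it follows from the maximal ergodic
theorem: if `∫ g < 0`, the set where the Birkhoff sums `S_n g` are unbounded above is invariant
and contained in `{∃ n, S_n g > 0}`, over which `g` has nonnegative integral, so it is null.

For the cylinders, `-log μ(C_{ξ_n}(x)) = ∑_{j<n} I_{n-1-j}(f^j x)`, where
`I_k(x) = -log (μ(C_{ξ_{k+1}}(x)) / μ(C_{ξ_k}(f x)))` is the information of the symbol of `x`
given the next `k` symbols. By Lévy's upward theorem `I_k` converges a.e., and Chung's maximal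
inequality `μ(sup_k I_k > t) ≤ #α e^{-t}` makes `sup_k I_k` integrable. Dominated convergence and
Cesàro averaging identify the integral of the limit with `h`, so for large `M` the function
`inf_{k ≥ M} I_k` has integral above `h - δ/2`, and its Birkhoff sums bound
`-log μ(C_{ξ_n}(x))` from below.

Both properties hold from some time on almost everywhere, so the sets of points of `Z` where they
hold from time `N` on exhaust `Z` up to a null set.
-/

open Filter MeasureTheory

section General

variable {X : Type*} [MeasurableSpace X] {μ : Measure X}

lemma MeasureTheory.MeasurePreserving.integral_comp_of_integrable {f : X → X}
    (hf : MeasurePreserving f μ μ) {g : X → ℝ} (hg : Integrable g μ) :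
    ∫ x, g (f x) ∂μ = ∫ x, g x ∂μ := by
  have h := integral_map (μ := μ) hf.aemeasurable (f := g)
    (by rw [hf.map_eq]; exact hg.aestronglyMeasurable)
  rwa [hf.map_eq, eq_comm] at h

lemma ae_measure_preimage_singleton_ne_zero {β : Type*} [Countable β] (p : X → β) :
    ∀ᵐ x ∂μ, μ (p ⁻¹' {p x}) ≠ 0 := by
  have hsub : {x | ¬μ (p ⁻¹' {p x}) ≠ 0} ⊆ ⋃ v ∈ {v | μ (p ⁻¹' {v}) = 0}, p ⁻¹' {v} :=
    fun x hx => Set.mem_biUnion (by simpa using hx) rfl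
  exact measure_mono_null hsub ((measure_biUnion_null_iff (Set.to_countable _)).2 fun v hv => hv)

lemma integral_comp_eq_sum {β : Type*} [Fintype β] [MeasurableSpace β]
    [MeasurableSingletonClass β] [IsFiniteMeasure μ] {p : X → β} (hp : Measurable p)
    (Φ : β → ℝ) : ∫ x, Φ (p x) ∂μ = ∑ v, μ.real (p ⁻¹' {v}) * Φ v := by
  rw [← integral_map hp.aemeasurable (Measurable.of_discrete.aestronglyMeasurable),
    integral_fintype Integrable.of_finite]
  simp [Measure.real, Measure.map_apply hp (measurableSet_singleton _)]

lemma integrable_of_measure_lt_le_mul_exp_neg {F : X → ℝ} (hF : Measurable F) (hF₀ : 0 ≤ F)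
    {C : ENNReal} (hC : C ≠ ⊤)
    (htail : ∀ t > 0, μ {x | t < F x} ≤ C * ENNReal.ofReal (Real.exp (-t))) :
    Integrable F μ := by
  refine ⟨hF.aestronglyMeasurable, (hasFiniteIntegral_iff_ofReal (ae_of_all _ hF₀)).2 ?_⟩
  rw [lintegral_eq_lintegral_meas_lt μ (ae_of_all _ hF₀) hF.aemeasurable]
  calc ∫⁻ t in Set.Ioi 0, μ {x | t < F x}
      ≤ ∫⁻ t in Set.Ioi 0, C * ENNReal.ofReal (Real.exp (-t)) :=
        setLIntegral_mono' measurableSet_Ioi htail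
    _ = C := by
        rw [lintegral_const_mul' _ _ hC, ← ofReal_integral_eq_lintegral_ofReal
          (integrableOn_exp_neg_Ioi 0) (ae_of_all _ fun t => (Real.exp_pos _).le),
          integral_exp_neg_Ioi_zero, ENNReal.ofReal_one, mul_one]
    _ < ⊤ := hC.lt_top

lemma exists_subset_forall_ge_mem [IsFiniteMeasure μ] {S : ℕ → Set X}
    (hS : ∀ n, MeasurableSet (S n)) (hae : ∀ᵐ x ∂μ, ∀ᶠ n in atTop, x ∈ S n)
    {Z : Set X} (hZ : MeasurableSet Z) {ε : ENNReal} (hε : ε ≠ 0) :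
    ∃ A ⊆ Z, MeasurableSet A ∧ μ Z - ε ≤ μ A ∧ ∃ N, ∀ x ∈ A, ∀ n, N ≤ n → x ∈ S n := by
  set A : ℕ → Set X := fun N => Z ∩ ⋂ n, ⋂ (_ : N ≤ n), S n
  have hA N : MeasurableSet (A N) :=
    hZ.inter (.iInter fun n => .iInter fun _ => hS n)
  have hmono : Monotone A := fun N N' hNN' x hx =>
    ⟨hx.1, Set.mem_iInter₂.2 fun n hn => Set.mem_iInter₂.1 hx.2 n (hNN'.trans hn)⟩
  have hunion : μ (⋃ N, A N) = μ Z := by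
    refine measure_congr (ae_eq_set.2 ⟨?_, ?_⟩)
    · rw [Set.sdiff_eq_empty.2 (Set.iUnion_subset fun N => Set.inter_subset_left),
        measure_empty]
    · have hnull : μ {x | ¬∀ᶠ n in atTop, x ∈ S n} = 0 := ae_iff.1 hae
      refine measure_mono_null (fun x hx => ?_) hnull
      intro hev
      refine hx.2 ?_
      obtain ⟨N, hN⟩ := eventually_atTop.1 hev
      exact Set.mem_iUnion.2 ⟨N, hx.1, Set.mem_iInter₂.2 hN⟩
  have hlim : Tendsto (fun N => μ (A N) + ε) atTop (nhds (μ Z + ε)) := by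
    rw [← hunion]
    exact (tendsto_measure_iUnion_atTop hmono).add_const ε
  obtain ⟨N, hN⟩ := (hlim.eventually
    (lt_mem_nhds (ENNReal.lt_add_right (measure_ne_top μ Z) hε))).exists
  exact ⟨A N, Set.inter_subset_left, hA N, tsub_le_iff_right.2 hN.le, N,
    fun x hx n hn => Set.mem_iInter₂.1 hx.2 n hn⟩

lemma Filter.Tendsto.tendsto_iInf_add {u : ℕ → ℝ} {l : ℝ} (hu : Tendsto u atTop (nhds l)) :
    Tendsto (fun M => ⨅ k, u (M + k)) atTop (nhds l) := by
  have hbdd M : BddBelow (Set.range fun k => u (M + k)) :=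
    hu.bddBelow_range.mono (Set.range_subset_iff.2 fun k => Set.mem_range_self _)
  refine tendsto_order.2 ⟨fun a ha => ?_, fun a ha => ?_⟩
  · obtain ⟨b, hab, hbl⟩ := exists_between ha
    obtain ⟨N, hN⟩ := eventually_atTop.1 (hu.eventually (lt_mem_nhds hbl))
    filter_upwards [eventually_ge_atTop N] with M hM
    exact hab.trans_le (le_ciInf fun k => (hN (M + k) (by omega)).le)
  · filter_upwards [hu.eventually (gt_mem_nhds ha)] with M hM
    exact (ciInf_le (hbdd M) 0).trans_lt hM

end General

section CondExp

variable {X : Type*} {m m₀ : MeasurableSpace X} {μ : Measure X}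

theorem condExp_indicator_comap_ae_eq {β : Type*} [MeasurableSpace β] [Countable β]
    [MeasurableSingletonClass β] [IsFiniteMeasure μ] {p : X → β} (hp : Measurable p)
    {B : Set X} (hB : MeasurableSet B) :
    μ[(B.indicator 1 : X → ℝ) | MeasurableSpace.comap p ‹_›] =ᵐ[μ]
      fun x => (μ (B ∩ p ⁻¹' {p x}) / μ (p ⁻¹' {p x})).toReal := by
  set r : β → ℝ := fun v => (μ (B ∩ p ⁻¹' {v}) / μ (p ⁻¹' {v})).toReal with hr_def
  have hr : Measurable fun x => r (p x) := (Measurable.of_discrete (f := r)).comp hp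
  have hr_int : Integrable (fun x => r (p x)) μ := by
    refine Integrable.of_bound hr.aestronglyMeasurable 1 (ae_of_all _ fun x => ?_)
    rw [Real.norm_of_nonneg ENNReal.toReal_nonneg]
    refine ENNReal.toReal_le_of_le_ofReal zero_le_one ?_
    rw [ENNReal.ofReal_one]
    exact ENNReal.div_le_of_le_mul (by rw [one_mul]; exact measure_mono Set.inter_subset_right)
  have hpiece (v : β) :
      ∫ x in p ⁻¹' {v}, r (p x) ∂μ = ∫ x in p ⁻¹' {v}, B.indicator 1 x ∂μ := by
    rw [setIntegral_congr_fun (hp (measurableSet_singleton v)) fun x hx => by rw [hx],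
      setIntegral_const, integral_indicator_one hB, measureReal_restrict_apply hB, smul_eq_mul,
      Measure.real, Measure.real]
    simp only [hr_def, ENNReal.toReal_div]
    rcases eq_or_ne (μ (p ⁻¹' {v})) 0 with h0 | h0
    · simp [h0, measure_mono_null Set.inter_subset_right h0]
    · exact mul_div_cancel₀ _ (ENNReal.toReal_ne_zero.2 ⟨h0, measure_ne_top _ _⟩)
  refine (ae_eq_condExp_of_forall_setIntegral_eq hp.comap_le
    ((integrable_const 1).indicator hB) (fun _ _ _ => hr_int.integrableOn) ?_
    ((Measurable.of_discrete (f := r)).comp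
      (comap_measurable p)).stronglyMeasurable.aestronglyMeasurable).symm
  · rintro _ ⟨T, -, rfl⟩ -
    have hT : p ⁻¹' T = ⋃ v : T, p ⁻¹' {(v : β)} := by ext; simp
    have hdisj : Pairwise (Function.onFun Disjoint fun v : T => p ⁻¹' {(v : β)}) :=
      fun v w hvw => (Set.disjoint_singleton.2 (Subtype.coe_injective.ne hvw)).preimage p
    have hmeas (v : T) : MeasurableSet (p ⁻¹' {(v : β)}) := hp (measurableSet_singleton _)
    rw [hT, integral_iUnion hmeas hdisj hr_int.integrableOn,
      integral_iUnion hmeas hdisj ((integrable_const 1).indicator hB).integrableOn]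
    exact tsum_congr fun v => hpiece v

lemma ae_pos_condExp_indicator (hm : m ≤ m₀) [IsFiniteMeasure μ]
    {B : Set X} (hB : MeasurableSet B) :
    ∀ᵐ x ∂μ, x ∈ B → 0 < μ[(B.indicator 1 : X → ℝ) | m] x := by
  set t := {x | μ[(B.indicator 1 : X → ℝ) | m] x ≤ 0}
  have ht : MeasurableSet[m] t :=
    measurableSet_le stronglyMeasurable_condExp.measurable measurable_const
  have hint : μ.real (B ∩ t) ≤ 0 := by
    rw [← measureReal_restrict_apply hB, ← integral_indicator_one hB,
      ← setIntegral_condExp hm ((integrable_const 1).indicator hB) ht]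
    exact setIntegral_nonpos (hm t ht) fun x hx => hx
  have hnull : μ (B ∩ t) = 0 :=
    (measureReal_eq_zero_iff (μ := μ)).1 (hint.antisymm measureReal_nonneg)
  rw [ae_iff]
  refine measure_mono_null (fun x hx => ?_) hnull
  simp only [Classical.not_imp, not_lt] at hx
  exact hx

/-- **Chung's maximal inequality**. -/
theorem measure_inter_exists_condExp_indicator_lt_le [IsProbabilityMeasure μ]
    (ℱ : Filtration ℕ m₀) {B : Set X} (hB : MeasurableSet B) (r : ℝ) :
    μ (B ∩ {x | ∃ k, μ[(B.indicator 1 : X → ℝ) | ℱ k] x < r}) ≤ ENNReal.ofReal r := by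
  set s : ℕ → Set X := fun k => {x | μ[(B.indicator 1 : X → ℝ) | ℱ k] x < r}
  have hs k : MeasurableSet[ℱ k] (s k) :=
    measurableSet_lt stronglyMeasurable_condExp.measurable measurable_const
  -- `disjointed s j` is the event that `j` is the first time the martingale drops below `r`
  have hA j : MeasurableSet[ℱ j] (disjointed s j) := by
    rw [disjointed_eq_inter_compl]
    exact (hs j).inter (.iInter fun i => .iInter fun hi => (ℱ.mono hi.le _ (hs i)).compl)
  have hA₀ j : MeasurableSet (disjointed s j) := ℱ.le j _ (hA j)
  have hpiece j : μ (B ∩ disjointed s j) ≤ ENNReal.ofReal r * μ (disjointed s j) := by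
    have hle : μ.real (B ∩ disjointed s j) ≤ r * μ.real (disjointed s j) := by
      rw [← measureReal_restrict_apply hB, ← integral_indicator_one hB,
        ← setIntegral_condExp (ℱ.le j) ((integrable_const 1).indicator hB) (hA j), mul_comm,
        ← smul_eq_mul, ← setIntegral_const]
      exact setIntegral_mono_on integrable_condExp.integrableOn (integrable_const r).integrableOn
        (hA₀ j) fun x hx => (disjointed_subset s j hx).le
    rw [← ofReal_measureReal, ← ofReal_measureReal, ← ENNReal.ofReal_mul' measureReal_nonneg]
    exact ENNReal.ofReal_le_ofReal hle
  calc μ (B ∩ {x | ∃ k, μ[(B.indicator 1 : X → ℝ) | ℱ k] x < r})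
      = μ (⋃ j, B ∩ disjointed s j) := by
        rw [← Set.inter_iUnion, iUnion_disjointed, Set.ofPred_exists]
    _ = ∑' j, μ (B ∩ disjointed s j) :=
        measure_iUnion (fun i j hij => ((disjoint_disjointed s hij).mono
          Set.inter_subset_right Set.inter_subset_right)) fun j => hB.inter (hA₀ j)
    _ ≤ ∑' j, ENNReal.ofReal r * μ (disjointed s j) := ENNReal.tsum_le_tsum hpiece
    _ = ENNReal.ofReal r * μ (⋃ j, disjointed s j) := by
        rw [ENNReal.tsum_mul_left, measure_iUnion (disjoint_disjointed s) hA₀]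
    _ ≤ ENNReal.ofReal r := mul_le_of_le_one_right' prob_le_one

end CondExp

section Birkhoff

variable {X : Type*} {f : X → X} {g : X → ℝ}

noncomputable def birkhoffMax (f : X → X) (g : X → ℝ) (N : ℕ) : X → ℝ :=
  (Finset.range (N + 1)).sup' Finset.nonempty_range_add_one (birkhoffSum f g)

lemma birkhoffSum_le_birkhoffMax {k N : ℕ} (hk : k ≤ N) (x : X) :
    birkhoffSum f g k x ≤ birkhoffMax f g N x := by
  rw [birkhoffMax, Finset.sup'_apply]
  exact Finset.le_sup' (fun k => birkhoffSum f g k x) (Finset.mem_range_succ_iff.2 hk)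

lemma birkhoffMax_nonneg (N : ℕ) (x : X) : 0 ≤ birkhoffMax f g N x :=
  (birkhoffSum_zero f g x).symm.trans_le (birkhoffSum_le_birkhoffMax (Nat.zero_le N) x)

lemma exists_birkhoffMax_eq (N : ℕ) (x : X) :
    ∃ k ≤ N, birkhoffMax f g N x = birkhoffSum f g k x := by
  obtain ⟨k, hk, hkx⟩ := Finset.exists_mem_eq_sup' Finset.nonempty_range_add_one
    (fun k => birkhoffSum f g k x)
  exact ⟨k, Finset.mem_range_succ_iff.1 hk, by rw [birkhoffMax, Finset.sup'_apply, hkx]⟩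

lemma birkhoffMax_le_add_birkhoffMax_comp {N : ℕ} {x : X} (hx : 0 < birkhoffMax f g N x) :
    birkhoffMax f g N x ≤ g x + birkhoffMax f g N (f x) := by
  obtain ⟨k, hkN, hk⟩ := exists_birkhoffMax_eq (f := f) (g := g) N x
  rcases k with _ | k
  · rw [hk, birkhoffSum_zero] at hx
    exact absurd hx (lt_irrefl 0)
  · rw [hk, birkhoffSum_succ']
    gcongr
    exact birkhoffSum_le_birkhoffMax (by omega) (f x)

lemma bddAbove_birkhoffSum_comp_iff (x : X) :
    BddAbove (Set.range fun n => birkhoffSum f g n (f x)) ↔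
      BddAbove (Set.range fun n => birkhoffSum f g n x) := by
  simp only [bddAbove_def, Set.forall_mem_range]
  constructor
  · rintro ⟨B, hB⟩
    refine ⟨max 0 (g x + B), fun n => ?_⟩
    rcases n with _ | n
    · simp
    · rw [birkhoffSum_succ']
      exact le_max_of_le_right (by linarith [hB n])
  · rintro ⟨B, hB⟩
    exact ⟨B - g x, fun n => by linarith [hB (n + 1), birkhoffSum_succ' f g n x]⟩

lemma ncard_iterate_mem_eq_birkhoffSum (U : Set X) (n : ℕ) (x : X) :
    ({l : ℕ | l < n ∧ f^[l] x ∈ U}.ncard : ℝ) = birkhoffSum f (U.indicator 1) n x := by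
  classical
  have hset : {l : ℕ | l < n ∧ f^[l] x ∈ U} =
      ↑((Finset.range n).filter fun l => f^[l] x ∈ U) := by
    ext l
    simp
  rw [hset, Set.ncard_coe_finset]
  simp [birkhoffSum, Set.indicator_apply, Finset.sum_boole]

variable [MeasurableSpace X] {μ : Measure X}

lemma measurable_birkhoffSum (hf : Measurable f) (hg : Measurable g) (n : ℕ) :
    Measurable (birkhoffSum f g n) :=
  Finset.measurable_sum _ fun k _ => hg.comp (hf.iterate k)

lemma integrable_birkhoffSum (hf : MeasurePreserving f μ μ) (hg : Integrable g μ) (n : ℕ) :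
    Integrable (birkhoffSum f g n) μ :=
  integrable_finsetSum _ fun k _ => (hf.iterate k).integrable_comp_of_integrable hg

lemma measurable_birkhoffMax (hf : Measurable f) (hg : Measurable g) (N : ℕ) :
    Measurable (birkhoffMax f g N) :=
  Finset.measurable_sup' _ fun k _ => measurable_birkhoffSum hf hg k

lemma integrable_birkhoffMax (hf : MeasurePreserving f μ μ) (hg : Measurable g)
    (hgi : Integrable g μ) (N : ℕ) : Integrable (birkhoffMax f g N) μ := by
  refine (integrable_finsetSum (Finset.range (N + 1))
    fun k _ => (integrable_birkhoffSum hf hgi k).abs).mono'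
    (measurable_birkhoffMax hf.measurable hg N).aestronglyMeasurable (ae_of_all _ fun x => ?_)
  obtain ⟨k, hkN, hk⟩ := exists_birkhoffMax_eq (f := f) (g := g) N x
  rw [Real.norm_eq_abs, hk]
  exact Finset.single_le_sum (f := fun k => |birkhoffSum f g k x|) (fun _ _ => abs_nonneg _)
    (Finset.mem_range_succ_iff.2 hkN)

/-- Garsia's proof: on `{M_N > 0}` one has `g ≥ M_N - M_N ∘ f`, and `M_N` vanishes off this set. -/
lemma setIntegral_birkhoffMax_pos_nonneg (hf : MeasurePreserving f μ μ) (hg : Measurable g)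
    (hgi : Integrable g μ) (N : ℕ) :
    0 ≤ ∫ x in {x | 0 < birkhoffMax f g N x}, g x ∂μ := by
  set M := birkhoffMax f g N
  set E := {x | 0 < M x}
  have hM : Integrable M μ := integrable_birkhoffMax hf hg hgi N
  have hMf : Integrable (fun x => M (f x)) μ := hf.integrable_comp_of_integrable hM
  have hE : MeasurableSet E :=
    measurableSet_lt measurable_const (measurable_birkhoffMax hf.measurable hg N)
  have hME : ∫ x in E, M x ∂μ = ∫ x, M x ∂μ := by
    refine setIntegral_eq_integral_of_forall_compl_eq_zero fun x hx => ?_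
    exact le_antisymm (not_lt.1 hx) (birkhoffMax_nonneg N x)
  have hMfE : ∫ x in E, M (f x) ∂μ ≤ ∫ x, M x ∂μ := by
    calc ∫ x in E, M (f x) ∂μ ≤ ∫ x, M (f x) ∂μ :=
          setIntegral_le_integral hMf (ae_of_all _ fun x => birkhoffMax_nonneg N (f x))
      _ = ∫ x, M x ∂μ := hf.integral_comp_of_integrable hM
  have hle : ∫ x in E, (M x - M (f x)) ∂μ ≤ ∫ x in E, g x ∂μ :=
    setIntegral_mono_on (hM.sub hMf).integrableOn hgi.integrableOn hE fun x hx => by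
      linarith [birkhoffMax_le_add_birkhoffMax_comp hx]
  rw [integral_sub hM.integrableOn hMf.integrableOn, hME] at hle
  linarith

/-- **Maximal ergodic theorem.** -/
theorem setIntegral_exists_birkhoffSum_pos_nonneg (hf : MeasurePreserving f μ μ)
    (hg : Measurable g) (hgi : Integrable g μ) :
    0 ≤ ∫ x in {x | ∃ n, 0 < birkhoffSum f g n x}, g x ∂μ := by
  have hunion : {x | ∃ n, 0 < birkhoffSum f g n x} = ⋃ N, {x | 0 < birkhoffMax f g N x} := by
    ext x
    simp only [Set.mem_ofPred_eq, Set.mem_iUnion]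
    constructor
    · rintro ⟨n, hn⟩
      exact ⟨n, hn.trans_le (birkhoffSum_le_birkhoffMax le_rfl x)⟩
    · rintro ⟨N, hN⟩
      obtain ⟨k, -, hk⟩ := exists_birkhoffMax_eq (f := f) (g := g) N x
      exact ⟨k, hk ▸ hN⟩
  have hmono : Monotone fun N => {x | 0 < birkhoffMax f g N x} := fun N N' hNN' x hx =>
    hx.trans_le <| by
      obtain ⟨k, hk, hkx⟩ := exists_birkhoffMax_eq (f := f) (g := g) N x
      exact hkx ▸ birkhoffSum_le_birkhoffMax (hk.trans hNN') x
  rw [hunion]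
  exact ge_of_tendsto' (tendsto_setIntegral_of_monotone
    (fun N => measurableSet_lt measurable_const (measurable_birkhoffMax hf.measurable hg N))
    hmono hgi.integrableOn) (setIntegral_birkhoffMax_pos_nonneg hf hg hgi)

lemma Ergodic.ae_bddAbove_birkhoffSum (herg : Ergodic f μ)
    (hg : Measurable g) (hgi : Integrable g μ) (hneg : ∫ x, g x ∂μ < 0) :
    ∀ᵐ x ∂μ, BddAbove (Set.range fun n => birkhoffSum f g n x) := by
  set B := {x | BddAbove (Set.range fun n => birkhoffSum f g n x)}
  have hB : MeasurableSet B :=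
    measurableSet_bddAbove_range fun n => measurable_birkhoffSum herg.measurable hg n
  refine (herg.ae_mem_or_ae_notMem hB (Set.ext bddAbove_birkhoffSum_comp_iff)).resolve_right
    fun hnot => hneg.not_ge ?_
  have hpos : ∀ᵐ x ∂μ, x ∈ {x | ∃ n, 0 < birkhoffSum f g n x} := by
    filter_upwards [hnot] with x hx
    by_contra hx'
    push Not at hx'
    exact hx ⟨0, Set.forall_mem_range.2 hx'⟩
  rw [← setIntegral_eq_integral_of_ae_compl_eq_zero (hpos.mono fun x hx hx' => absurd hx hx')]
  exact setIntegral_exists_birkhoffSum_pos_nonneg herg.toMeasurePreserving hg hgi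

theorem Ergodic.ae_eventually_birkhoffSum_lt (herg : Ergodic f μ) [IsProbabilityMeasure μ]
    (hg : Measurable g) (hgi : Integrable g μ) {c : ℝ} (hc : ∫ x, g x ∂μ < c) :
    ∀ᵐ x ∂μ, ∀ᶠ n : ℕ in atTop, birkhoffSum f g n x < c * n := by
  set c' := (∫ x, g x ∂μ + c) / 2
  have hint : ∫ x, (g x - c') ∂μ < 0 := by
    rw [integral_sub hgi (integrable_const c'), integral_const]
    simp only [probReal_univ, smul_eq_mul, one_mul, c']
    linarith
  filter_upwards [herg.ae_bddAbove_birkhoffSum (hg.sub measurable_const)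
    (hgi.sub (integrable_const c')) hint] with x ⟨A, hA⟩
  have hsum (n : ℕ) : birkhoffSum f g n x - c' * n ≤ A := by
    simpa [birkhoffSum_sub, birkhoffSum, mul_comm] using hA ⟨n, rfl⟩
  have hc' : 0 < c - c' := by simp only [c']; linarith
  filter_upwards [(tendsto_natCast_atTop_atTop (R := ℝ)).eventually_gt_atTop (A / (c - c'))]
    with n hn
  rw [div_lt_iff₀ hc'] at hn
  linarith [hsum n]

theorem Ergodic.ae_eventually_lt_birkhoffSum (herg : Ergodic f μ) [IsProbabilityMeasure μ]
    (hg : Measurable g) (hgi : Integrable g μ) {c : ℝ} (hc : c < ∫ x, g x ∂μ) :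
    ∀ᵐ x ∂μ, ∀ᶠ n : ℕ in atTop, c * n < birkhoffSum f g n x := by
  have hneg : ∫ x, -g x ∂μ < -c := by rw [integral_neg]; linarith
  filter_upwards [herg.ae_eventually_birkhoffSum_lt hg.neg hgi.neg hneg] with x hx
  filter_upwards [hx] with n hn
  rw [birkhoffSum_neg] at hn
  linarith

end Birkhoff

section Itinerary

variable {X α : Type*} (f : X → X) (π : X → α)

def itinerary (n : ℕ) (x : X) : Fin n → α := fun i => π (f^[i] x)

/-- `cylinderSet f π n (itinerary f π n x)` is the element `C_{ξ_n}(x)` of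
`ξ_n = ⋁_{i<n} f⁻ⁱ ξ` containing `x`, where `ξ` is the partition into the fibres of `π`. -/
def cylinderSet (n : ℕ) (s : Fin n → α) : Set X := {y | ∀ i : Fin n, π (f^[i] y) = s i}

lemma cylinderSet_eq_preimage (n : ℕ) (s : Fin n → α) :
    cylinderSet f π n s = itinerary f π n ⁻¹' {s} := by
  ext y
  simp [cylinderSet, itinerary, funext_iff]

lemma cylinderSet_succ (n : ℕ) (x : X) :
    cylinderSet f π (n + 1) (itinerary f π (n + 1) x) =
      π ⁻¹' {π x} ∩ f ⁻¹' cylinderSet f π n (itinerary f π n (f x)) := by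
  ext y
  simp [cylinderSet, itinerary, Fin.forall_fin_succ, Function.iterate_succ_apply]

variable [MeasurableSpace X] [MeasurableSpace α] {f π}

lemma measurable_itinerary (hf : Measurable f) (hπ : Measurable π) (n : ℕ) :
    Measurable (itinerary f π n) :=
  measurable_pi_lambda _ fun i => hπ.comp (hf.iterate i)

lemma measurableSet_cylinderSet [MeasurableSingletonClass α] (hf : Measurable f)
    (hπ : Measurable π) (n : ℕ) (s : Fin n → α) : MeasurableSet (cylinderSet f π n s) := by
  rw [cylinderSet_eq_preimage]
  exact measurable_itinerary hf hπ n (measurableSet_singleton s)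

def futureFiltration (hf : Measurable f) (hπ : Measurable π) :
    Filtration ℕ ‹MeasurableSpace X› where
  seq k := MeasurableSpace.comap (itinerary f π k ∘ f) inferInstance
  mono' k l hkl := by
    have hres : Measurable fun (v : Fin l → α) (i : Fin k) => v (Fin.castLE hkl i) :=
      measurable_pi_lambda _ fun i => measurable_pi_apply _
    change MeasurableSpace.comap ((fun v i => v (Fin.castLE hkl i)) ∘ itinerary f π l ∘ f) _ ≤ _
    rw [← MeasurableSpace.comap_comp]
    exact MeasurableSpace.comap_mono hres.comap_le
  le' k := ((measurable_itinerary hf hπ k).comp hf).comap_le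

end Itinerary

section Information

variable {X α : Type*} [MeasurableSpace X] {μ : Measure X} {f : X → X} {π : X → α}

variable (μ f π) in
noncomputable def info (n : ℕ) (x : X) : ℝ :=
  -Real.log (μ (cylinderSet f π n (itinerary f π n x))).toReal

variable (μ f π) in
/-- `μ(C_{ξ_{k+1}}(x)) / μ(C_{ξ_k}(f x))`, the conditional probability of the symbol of `x`
given the `k` symbols that follow it. -/
noncomputable def condProb (k : ℕ) (x : X) : ℝ :=
  (μ (cylinderSet f π (k + 1) (itinerary f π (k + 1) x)) /
    μ (cylinderSet f π k (itinerary f π k (f x)))).toReal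

variable (μ f π) in
noncomputable def condInfo (k : ℕ) (x : X) : ℝ := -Real.log (condProb μ f π k x)

lemma condProb_nonneg (k : ℕ) (x : X) : 0 ≤ condProb μ f π k x := ENNReal.toReal_nonneg

lemma condProb_lt_exp_neg_of_lt_condInfo {k : ℕ} {x : X} {t : ℝ} (ht : t < condInfo μ f π k x) :
    condProb μ f π k x < Real.exp (-t) := by
  rcases (condProb_nonneg (μ := μ) (f := f) (π := π) k x).eq_or_lt with h0 | hpos
  · rw [← h0]
    exact Real.exp_pos _
  · rw [← Real.log_lt_iff_lt_exp hpos]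
    rw [condInfo] at ht
    linarith

variable [MeasurableSpace α] [MeasurableSingletonClass α]

lemma measure_cylinderSet_succ_le (hf : MeasurePreserving f μ μ) (hπ : Measurable π)
    (k : ℕ) (x : X) :
    μ (cylinderSet f π (k + 1) (itinerary f π (k + 1) x)) ≤
      μ (cylinderSet f π k (itinerary f π k (f x))) := by
  rw [cylinderSet_succ,
    ← hf.measure_preimage (measurableSet_cylinderSet hf.measurable hπ _ _).nullMeasurableSet]
  exact measure_mono Set.inter_subset_right

lemma condInfo_nonneg (hf : MeasurePreserving f μ μ) (hπ : Measurable π) (k : ℕ) (x : X) :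
    0 ≤ condInfo μ f π k x := by
  refine neg_nonneg.2 (Real.log_nonpos ENNReal.toReal_nonneg ?_)
  refine ENNReal.toReal_le_of_le_ofReal zero_le_one ?_
  rw [ENNReal.ofReal_one]
  exact ENNReal.div_le_of_le_mul (by rw [one_mul]; exact measure_cylinderSet_succ_le hf hπ k x)

lemma info_succ [IsFiniteMeasure μ] (hf : MeasurePreserving f μ μ) (hπ : Measurable π)
    {n : ℕ} {x : X} (hx : μ (cylinderSet f π (n + 1) (itinerary f π (n + 1) x)) ≠ 0) :
    info μ f π (n + 1) x = condInfo μ f π n x + info μ f π n (f x) := by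
  have hfx := (hx.bot_lt.trans_le (measure_cylinderSet_succ_le hf hπ n x)).ne'
  rw [info, condInfo, condProb, info, ENNReal.toReal_div,
    Real.log_div (ENNReal.toReal_ne_zero.2 ⟨hx, measure_ne_top _ _⟩)
      (ENNReal.toReal_ne_zero.2 ⟨hfx, measure_ne_top _ _⟩)]
  ring

lemma info_eq_sum_condInfo [IsProbabilityMeasure μ] (hf : MeasurePreserving f μ μ)
    (hπ : Measurable π) {n : ℕ} {x : X}
    (hx : μ (cylinderSet f π n (itinerary f π n x)) ≠ 0) :
    info μ f π n x = ∑ j ∈ Finset.range n, condInfo μ f π (n - 1 - j) (f^[j] x) := by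
  induction n generalizing x with
  | zero => simp [info, cylinderSet]
  | succ n ih =>
    have hfx := (hx.bot_lt.trans_le (measure_cylinderSet_succ_le hf hπ n x)).ne'
    rw [info_succ hf hπ hx, ih hfx, Finset.sum_range_succ', add_comm]
    simp only [Function.iterate_succ_apply, Function.iterate_zero_apply]
    congr 1
    exact Finset.sum_congr rfl fun j _ => by rw [show n + 1 - 1 - (j + 1) = n - 1 - j by omega]

lemma birkhoffSum_iInf_condInfo_le_info [IsProbabilityMeasure μ] (hf : MeasurePreserving f μ μ)
    (hπ : Measurable π) {n : ℕ} {x : X} (hx : μ (cylinderSet f π n (itinerary f π n x)) ≠ 0)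
    (M : ℕ) :
    birkhoffSum f (fun y => ⨅ k, condInfo μ f π (M + k) y) (n - M) x ≤ info μ f π n x := by
  rw [info_eq_sum_condInfo hf hπ hx, birkhoffSum]
  calc ∑ j ∈ Finset.range (n - M), ⨅ k, condInfo μ f π (M + k) (f^[j] x)
      ≤ ∑ j ∈ Finset.range (n - M), condInfo μ f π (n - 1 - j) (f^[j] x) := by
        refine Finset.sum_le_sum fun j hj => ?_
        obtain ⟨k, hk⟩ : ∃ k, n - 1 - j = M + k :=
          ⟨n - 1 - j - M, by rw [Finset.mem_range] at hj; omega⟩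
        rw [hk]
        exact ciInf_le ⟨0, Set.forall_mem_range.2 fun k => condInfo_nonneg hf hπ _ _⟩ k
    _ ≤ ∑ j ∈ Finset.range n, condInfo μ f π (n - 1 - j) (f^[j] x) :=
        Finset.sum_le_sum_of_subset_of_nonneg (Finset.range_subset_range.2 (Nat.sub_le n M))
          fun j _ _ => condInfo_nonneg hf hπ _ _

lemma measurable_measure_cylinderSet_itinerary [Finite α] (hf : Measurable f)
    (hπ : Measurable π) (n : ℕ) :
    Measurable fun x => μ (cylinderSet f π n (itinerary f π n x)) :=
  (Measurable.of_discrete (f := fun s => μ (cylinderSet f π n s))).comp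
    (measurable_itinerary hf hπ n)

lemma measurable_condInfo [Finite α] (hf : Measurable f) (hπ : Measurable π) (k : ℕ) :
    Measurable (condInfo μ f π k) :=
  ((measurable_measure_cylinderSet_itinerary hf hπ (k + 1)).div
    ((measurable_measure_cylinderSet_itinerary hf hπ k).comp hf)).ennreal_toReal.log.neg

end Information

section ConditionalInformation

variable {X α : Type*} [MeasurableSpace X] [MeasurableSpace α] [MeasurableSingletonClass α]
  [Fintype α] {μ : Measure X} [IsProbabilityMeasure μ] {f : X → X} {π : X → α}

lemma condProb_ae_eq_condExp (hf : MeasurePreserving f μ μ) (hπ : Measurable π) :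
    ∀ᵐ x ∂μ, ∀ k, condProb μ f π k x =
      μ[((π ⁻¹' {π x}).indicator 1 : X → ℝ) | futureFiltration hf.measurable hπ k] x := by
  have h : ∀ᵐ x ∂μ, ∀ k, ∀ s : α,
      μ[((π ⁻¹' {s}).indicator 1 : X → ℝ) | futureFiltration hf.measurable hπ k] x =
        (μ (π ⁻¹' {s} ∩ (itinerary f π k ∘ f) ⁻¹' {itinerary f π k (f x)}) /
          μ ((itinerary f π k ∘ f) ⁻¹' {itinerary f π k (f x)})).toReal :=
    ae_all_iff.2 fun k => ae_all_iff.2 fun s => condExp_indicator_comap_ae_eq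
      ((measurable_itinerary hf.measurable hπ k).comp hf.measurable)
      (hπ (measurableSet_singleton s))
  filter_upwards [h] with x hx k
  rw [hx k (π x), condProb, cylinderSet_succ, Set.preimage_comp, ← cylinderSet_eq_preimage,
    hf.measure_preimage (measurableSet_cylinderSet hf.measurable hπ _ _).nullMeasurableSet]

lemma ae_tendsto_condInfo (hf : MeasurePreserving f μ μ) (hπ : Measurable π) :
    ∃ φ : X → ℝ, ∀ᵐ x ∂μ, Tendsto (fun k => condInfo μ f π k x) atTop (nhds (φ x)) := by
  set ℱ := futureFiltration hf.measurable hπ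
  refine ⟨fun x => -Real.log (μ[((π ⁻¹' {π x}).indicator 1 : X → ℝ) | ⨆ k, ℱ k] x), ?_⟩
  have hlim : ∀ᵐ x ∂μ, ∀ s : α, Tendsto (fun k => μ[((π ⁻¹' {s}).indicator 1 : X → ℝ) | ℱ k] x)
      atTop (nhds (μ[((π ⁻¹' {s}).indicator 1 : X → ℝ) | ⨆ k, ℱ k] x)) :=
    ae_all_iff.2 fun s => tendsto_ae_condExp _
  have hpos : ∀ᵐ x ∂μ, ∀ s : α, x ∈ π ⁻¹' {s} →
      0 < μ[((π ⁻¹' {s}).indicator 1 : X → ℝ) | ⨆ k, ℱ k] x :=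
    ae_all_iff.2 fun s => ae_pos_condExp_indicator (iSup_le ℱ.le) (hπ (measurableSet_singleton s))
  filter_upwards [hlim, hpos, condProb_ae_eq_condExp hf hπ] with x hlim hpos hq
  simp_rw [condInfo, hq]
  exact ((Real.continuousAt_log (hpos (π x) rfl).ne').tendsto.comp (hlim (π x))).neg

lemma measure_exists_lt_condInfo_le (hf : MeasurePreserving f μ μ) (hπ : Measurable π) (t : ℝ) :
    μ {x | ∃ k, t < condInfo μ f π k x} ≤ Fintype.card α * ENNReal.ofReal (Real.exp (-t)) := by
  set ℱ := futureFiltration hf.measurable hπ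
  calc μ {x | ∃ k, t < condInfo μ f π k x}
      ≤ μ (⋃ s : α, π ⁻¹' {s} ∩
          {x | ∃ k, μ[((π ⁻¹' {s}).indicator 1 : X → ℝ) | ℱ k] x < Real.exp (-t)}) := by
        refine measure_mono_ae ?_
        filter_upwards [condProb_ae_eq_condExp hf hπ] with x hq ⟨k, hk⟩
        exact Set.mem_iUnion.2 ⟨π x, rfl, k, hq k ▸ condProb_lt_exp_neg_of_lt_condInfo hk⟩
    _ ≤ ∑ s : α, μ (π ⁻¹' {s} ∩
          {x | ∃ k, μ[((π ⁻¹' {s}).indicator 1 : X → ℝ) | ℱ k] x < Real.exp (-t)}) :=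
        measure_iUnion_fintype_le _ _
    _ ≤ ∑ _s : α, ENNReal.ofReal (Real.exp (-t)) := Finset.sum_le_sum fun s _ =>
        measure_inter_exists_condExp_indicator_lt_le ℱ (hπ (measurableSet_singleton s)) _
    _ = Fintype.card α * ENNReal.ofReal (Real.exp (-t)) := by
        rw [Finset.sum_const, Finset.card_univ, nsmul_eq_mul]

lemma integrable_iSup_condInfo (hf : MeasurePreserving f μ μ) (hπ : Measurable π) :
    Integrable (fun x => ⨆ k, condInfo μ f π k x) μ :=
  integrable_of_measure_lt_le_mul_exp_neg
    (Measurable.iSup fun k => measurable_condInfo hf.measurable hπ k)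
    (fun x => Real.iSup_nonneg fun k => condInfo_nonneg hf hπ k x) (ENNReal.natCast_ne_top _)
    fun t _ => (measure_mono fun _ hx => exists_lt_of_lt_ciSup hx).trans
      (measure_exists_lt_condInfo_le hf hπ t)

lemma ae_condInfo_le_iSup (hf : MeasurePreserving f μ μ) (hπ : Measurable π) :
    ∀ᵐ x ∂μ, ∀ k, condInfo μ f π k x ≤ ⨆ k, condInfo μ f π k x := by
  obtain ⟨φ, hφ⟩ := ae_tendsto_condInfo hf hπ
  filter_upwards [hφ] with x hx k
  exact le_ciSup hx.bddAbove_range k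

lemma integrable_condInfo (hf : MeasurePreserving f μ μ) (hπ : Measurable π) (k : ℕ) :
    Integrable (condInfo μ f π k) μ := by
  refine (integrable_iSup_condInfo hf hπ).mono'
    (measurable_condInfo hf.measurable hπ k).aestronglyMeasurable ?_
  filter_upwards [ae_condInfo_le_iSup hf hπ] with x hx
  rw [Real.norm_of_nonneg (condInfo_nonneg hf hπ k x)]
  exact hx k

lemma integral_info (hf : Measurable f) (hπ : Measurable π) (n : ℕ) :
    ∫ x, info μ f π n x ∂μ = ∑ s, Real.negMulLog (μ (cylinderSet f π n s)).toReal := by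
  unfold info
  rw [integral_comp_eq_sum (measurable_itinerary hf hπ n)
    fun s => -Real.log (μ (cylinderSet f π n s)).toReal]
  refine Finset.sum_congr rfl fun s _ => ?_
  rw [← cylinderSet_eq_preimage, Real.negMulLog, Measure.real]
  ring

lemma integral_info_eq_sum (hf : MeasurePreserving f μ μ) (hπ : Measurable π) (n : ℕ) :
    ∫ x, info μ f π n x ∂μ = ∑ k ∈ Finset.range n, ∫ x, condInfo μ f π k x ∂μ := by
  calc ∫ x, info μ f π n x ∂μ
      = ∫ x, ∑ j ∈ Finset.range n, condInfo μ f π (n - 1 - j) (f^[j] x) ∂μ := by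
        refine integral_congr_ae ?_
        filter_upwards [ae_measure_preimage_singleton_ne_zero (itinerary f π n)] with x hx
        exact info_eq_sum_condInfo hf hπ (by rwa [cylinderSet_eq_preimage])
    _ = ∑ j ∈ Finset.range n, ∫ x, condInfo μ f π (n - 1 - j) x ∂μ := by
        rw [integral_finsetSum (f := fun j x => condInfo μ f π (n - 1 - j) (f^[j] x)) _
          fun j _ => (hf.iterate j).integrable_comp_of_integrable (integrable_condInfo hf hπ _)]
        exact Finset.sum_congr rfl fun j _ =>
          (hf.iterate j).integral_comp_of_integrable (integrable_condInfo hf hπ _)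
    _ = ∑ k ∈ Finset.range n, ∫ x, condInfo μ f π k x ∂μ :=
        Finset.sum_range_reflect (fun k => ∫ x, condInfo μ f π k x ∂μ) n

end ConditionalInformation

section ShannonMcMillanBreiman

variable {X α : Type*} [MeasurableSpace X] [MeasurableSpace α] [MeasurableSingletonClass α]
  [Fintype α] {μ : Measure X} [IsProbabilityMeasure μ] {f : X → X} {π : X → α}

lemma integral_eq_of_tendsto_condInfo (hf : MeasurePreserving f μ μ) (hπ : Measurable π)
    {φ : X → ℝ} (hφ : ∀ᵐ x ∂μ, Tendsto (fun k => condInfo μ f π k x) atTop (nhds (φ x)))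
    {h : ℝ} (hh : Tendsto (fun n : ℕ =>
      (∑ s, Real.negMulLog (μ (cylinderSet f π n s)).toReal) / n) atTop (nhds h)) :
    ∫ x, φ x ∂μ = h := by
  have hint : Tendsto (fun k => ∫ x, condInfo μ f π k x ∂μ) atTop (nhds (∫ x, φ x ∂μ)) := by
    refine tendsto_integral_of_dominated_convergence _
      (fun k => (measurable_condInfo hf.measurable hπ k).aestronglyMeasurable)
      (integrable_iSup_condInfo hf hπ) (fun k => ?_) hφ
    filter_upwards [ae_condInfo_le_iSup hf hπ] with x hx
    rw [Real.norm_of_nonneg (condInfo_nonneg hf hπ k x)]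
    exact hx k
  refine tendsto_nhds_unique (hint.cesaro.congr fun n => ?_) hh
  rw [← integral_info_eq_sum hf hπ, integral_info hf.measurable hπ, div_eq_inv_mul]

lemma exists_lt_integral_iInf_condInfo (hf : MeasurePreserving f μ μ) (hπ : Measurable π)
    {h : ℝ} (hh : Tendsto (fun n : ℕ =>
      (∑ s, Real.negMulLog (μ (cylinderSet f π n s)).toReal) / n) atTop (nhds h))
    {c : ℝ} (hc : c < h) :
    ∃ M, c < ∫ x, ⨅ k, condInfo μ f π (M + k) x ∂μ := by
  obtain ⟨φ, hφ⟩ := ae_tendsto_condInfo hf hπ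
  have hlim : Tendsto (fun M => ∫ x, ⨅ k, condInfo μ f π (M + k) x ∂μ) atTop (nhds h) := by
    rw [← integral_eq_of_tendsto_condInfo hf hπ hφ hh]
    refine tendsto_integral_of_dominated_convergence _ (fun M => (Measurable.iInf fun k =>
      measurable_condInfo hf.measurable hπ _).aestronglyMeasurable)
      (integrable_iSup_condInfo hf hπ) (fun M => ?_) ?_
    · filter_upwards [ae_condInfo_le_iSup hf hπ] with x hx
      rw [Real.norm_of_nonneg (Real.iInf_nonneg fun k => condInfo_nonneg hf hπ _ x)]
      exact (ciInf_le ⟨0, Set.forall_mem_range.2 fun k => condInfo_nonneg hf hπ _ x⟩ 0).trans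
        (hx _)
    · filter_upwards [hφ] with x hx
      exact hx.tendsto_iInf_add
  exact (hlim.eventually (lt_mem_nhds hc)).exists

/-- The lower half of the **Shannon–McMillan–Breiman theorem**. -/
theorem Ergodic.ae_eventually_measure_cylinderSet_le (herg : Ergodic f μ) (hπ : Measurable π)
    {h δ : ℝ} (hδ : 0 < δ) (hh : Tendsto (fun n : ℕ =>
      (∑ s, Real.negMulLog (μ (cylinderSet f π n s)).toReal) / n) atTop (nhds h)) :
    ∀ᵐ x ∂μ, ∀ᶠ n : ℕ in atTop,
      μ (cylinderSet f π n (itinerary f π n x)) ≤ ENNReal.ofReal (Real.exp (-(h - δ) * n)) := by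
  have hf := herg.toMeasurePreserving
  obtain ⟨M, hM⟩ := exists_lt_integral_iInf_condInfo hf hπ hh (sub_lt_self h (half_pos hδ))
  set G := fun x => ⨅ k, condInfo μ f π (M + k) x
  have hGm : Measurable G := Measurable.iInf fun k => measurable_condInfo hf.measurable hπ _
  have hG : Integrable G μ := by
    refine (integrable_condInfo hf hπ M).mono' hGm.aestronglyMeasurable (ae_of_all _ fun x => ?_)
    rw [Real.norm_of_nonneg (Real.iInf_nonneg fun k => condInfo_nonneg hf hπ _ x)]
    exact ciInf_le ⟨0, Set.forall_mem_range.2 fun k => condInfo_nonneg hf hπ _ x⟩ 0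
  filter_upwards [herg.ae_eventually_lt_birkhoffSum hGm hG hM] with x hx
  filter_upwards [(tendsto_sub_atTop_nat M).eventually hx, eventually_ge_atTop M,
    (tendsto_natCast_atTop_atTop.const_mul_atTop (half_pos hδ)).eventually_ge_atTop
      ((h - δ / 2) * M)] with n hn hnM hnδ
  rcases eq_or_ne (μ (cylinderSet f π n (itinerary f π n x))) 0 with h0 | h0
  · simp [h0]
  have hinfo : (h - δ) * n ≤ info μ f π n x := by
    have := birkhoffSum_iInf_condInfo_le_info hf hπ h0 M
    rw [Nat.cast_sub hnM] at hn
    nlinarith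
  rw [← ENNReal.ofReal_toReal (measure_ne_top μ _)]
  refine ENNReal.ofReal_le_ofReal ?_
  rw [← Real.log_le_iff_le_exp (ENNReal.toReal_pos h0 (measure_ne_top μ _))]
  rw [info] at hinfo
  linarith

end ShannonMcMillanBreiman

theorem stmt8_general {X : Type*} [MetricSpace X]
    [MeasurableSpace X] [BorelSpace X]
    (f : X → X) (μ : Measure X) [IsProbabilityMeasure μ]
    (herg : Ergodic f μ)
    (K : ℕ) (π : X → Fin (K + 1)) (hπ : Measurable π)
    (h : ℝ)
    (hh : Tendsto (fun n : ℕ =>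
        (∑ s : Fin n → Fin (K + 1), Real.negMulLog
          ((μ {y : X | ∀ i : Fin n, π (f^[(i : ℕ)] y) = s i}).toReal)) / n)
      atTop (nhds h))
    (δ : ℝ) (hδ : 0 < δ) (U : Set X) (hU : IsOpen U)
    (hUμ : μ U ≤ ENNReal.ofReal δ)
    (Z : Set X) (hZ : MeasurableSet Z) :
    ∃ A : Set X, A ⊆ Z ∧ MeasurableSet A ∧ μ Z - ENNReal.ofReal δ ≤ μ A ∧
      ∃ N : ℕ, ∀ x ∈ A, ∀ n : ℕ, N ≤ n →
        (({l : ℕ | l < n ∧ f^[l] x ∈ U}.ncard : ℝ) ≤ 2 * δ * n ∧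
          μ {y : X | ∀ i : Fin n, π (f^[(i : ℕ)] y) = π (f^[(i : ℕ)] x)}
            ≤ ENNReal.ofReal (Real.exp (-(h - δ) * n))) := by
  have hU' := hU.measurableSet
  have hUδ : ∫ x, U.indicator (1 : X → ℝ) x ∂μ < 2 * δ := by
    have hμU := ENNReal.toReal_mono ENNReal.ofReal_ne_top hUμ
    rw [ENNReal.toReal_ofReal hδ.le] at hμU
    rw [integral_indicator_one hU']
    exact hμU.trans_lt (by linarith)
  have hvisits : ∀ᵐ x ∂μ, ∀ᶠ n : ℕ in atTop, birkhoffSum f (U.indicator 1) n x < 2 * δ * n :=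
    herg.ae_eventually_birkhoffSum_lt (measurable_const.indicator hU')
      ((integrable_const 1).indicator hU') hUδ
  obtain ⟨A, hAZ, hA, hμA, N, hN⟩ := exists_subset_forall_ge_mem
    (S := fun n => {x | birkhoffSum f (U.indicator 1) n x ≤ 2 * δ * n} ∩
      {x | μ (cylinderSet f π n (itinerary f π n x)) ≤ ENNReal.ofReal (Real.exp (-(h - δ) * n))})
    (fun n => (measurableSet_le (measurable_birkhoffSum herg.measurable
      (measurable_const.indicator hU') n) measurable_const).inter
      (measurableSet_le (measurable_measure_cylinderSet_itinerary herg.measurable hπ n)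
        measurable_const))
    (by
      filter_upwards [hvisits, herg.ae_eventually_measure_cylinderSet_le hπ hδ hh] with x hx₁ hx₂
      filter_upwards [hx₁, hx₂] with n hn₁ hn₂
      exact ⟨hn₁.le, hn₂⟩)
    hZ (ENNReal.ofReal_pos.2 hδ).ne'
  refine ⟨A, hAZ, hA, hμA, N, fun x hx n hn => ?_⟩
  obtain ⟨hvis, hcyl⟩ := hN x hx n hn
  exact ⟨(ncard_iterate_mem_eq_birkhoffSum U n x).trans_le hvis, hcyl⟩

/-- Given an ergodic measure `μ`, a finite Borel partition (encoded as a
measurable map `π : X → Fin (K+1)`) with entropy `h_μ(f,ξ) = h` finite, `δ > 0`, an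
open set `U` with `μ(U) ≤ δ` and `Z` with `μ(Z) > 0`, there are `A ⊆ Z` with
`μ(A) ≥ μ(Z) − δ` and `N` such that for `x ∈ A`, `n ≥ N`: the orbit of `x` visits
`U` at most `2δn` times up to time `n`, and `μ(C_{ξ_n}(x)) ≤ exp(−(h−δ)n)`. -/
theorem stmt8 {X : Type*} [MetricSpace X] [CompactSpace X]
    [MeasurableSpace X] [BorelSpace X]
    (f : X → X) (hf : Continuous f) (μ : Measure X) [IsProbabilityMeasure μ]
    (herg : Ergodic f μ)
    (K : ℕ) (π : X → Fin (K + 1)) (hπ : Measurable π)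
    (h : ℝ)
    (hh : Tendsto (fun n : ℕ =>
        (∑ s : Fin n → Fin (K + 1), Real.negMulLog
          ((μ {y : X | ∀ i : Fin n, π (f^[(i : ℕ)] y) = s i}).toReal)) / n)
      atTop (nhds h))
    (δ : ℝ) (hδ : 0 < δ) (U : Set X) (hU : IsOpen U)
    (hUμ : μ U ≤ ENNReal.ofReal δ)
    (Z : Set X) (hZ : MeasurableSet Z) (hZpos : 0 < μ Z) :
    ∃ A : Set X, A ⊆ Z ∧ MeasurableSet A ∧ μ Z - ENNReal.ofReal δ ≤ μ A ∧
      ∃ N : ℕ, ∀ x ∈ A, ∀ n : ℕ, N ≤ n →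
        (({l : ℕ | l < n ∧ f^[l] x ∈ U}.ncard : ℝ) ≤ 2 * δ * n ∧
          μ {y : X | ∀ i : Fin n, π (f^[(i : ℕ)] y) = π (f^[(i : ℕ)] x)}
            ≤ ENNReal.ofReal (Real.exp (-(h - δ) * n))) :=
  stmt8_general f μ herg K π hπ h hh δ hδ U hU hUμ Z hZ
end

section
/- Entropy Distribution Principle: Let (X,d) be a compact metric space, f : X → X continuous, Z ⊆ X a Borel set, ε > 0 and s ≥ 0. Suppose there exist Borel probability measures μ_k on X, a constant K > 0 and N ∈ ℕ such that limsup_{k→∞} μ_k(B_n(x,ε)) ≤ K e^{−ns} for every Bowen ball B_n(x,ε) with B_n(x,ε) ∩ Z ≠ ∅ and n ≥ N, and suppose some weak-* limit measure ν of (μ_k) satisfies ν(Z) > 0. Then h_top(Z,ε) ≥ s. -/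
/-!
A weak-* cluster point `ν` of `(μ_k)` gives open sets at most the `limsup` of
their `μ_k`-masses, so every Bowen ball `B_n(x,ε)` meeting `Z` with `n ≥ N` has
`ν(B_n(x,ε)) ≤ K e^{-ns}`. Hence for `α < s` any admissible cover of `Z` has
`0 < ν(Z) ≤ K Σ e^{-α nᵢ}`, so `M(Z,α,ε,N) > 0` and `m(Z,α,ε) ≠ 0`.

The infimum defining `h_top(Z,ε)` is over a nonempty set: on a compact space, itineraries through
a finite `ε/2`-net show that `m^n` Bowen balls of length `n` cover `X`, so `m(Z,α,ε) = 0` once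
`e^α > m`.
-/

open Filter MeasureTheory
open scoped ENNReal

noncomputable section

/-- Bowen ball `B_n(x,ε)`. -/
def bowenBall {X : Type*} [MetricSpace X] (f : X → X) (n : ℕ) (x : X) (ε : ℝ) :
    Set X :=
  {y : X | ∀ j < n, dist (f^[j] x) (f^[j] y) < ε}

/-- `M(Z,α,ε,N)`: infimum over countable covers of `Z` by Bowen balls of length
`≥ N` of `Σ exp(−α nᵢ)`. -/
def Mcover {X : Type*} [MetricSpace X] (f : X → X) (Z : Set X) (α ε : ℝ)
    (N : ℕ) : ℝ≥0∞ :=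
  sInf {r : ℝ≥0∞ | ∃ C : Set (X × ℕ), C.Countable ∧ (∀ p ∈ C, N ≤ p.2) ∧
    Z ⊆ (⋃ p ∈ C, bowenBall f p.2 p.1 ε) ∧
    r = ∑' p : C, ENNReal.ofReal (Real.exp (-α * (p : X × ℕ).2))}

/-- `m(Z,α,ε) = lim_{N→∞} M(Z,α,ε,N)` (the limit of the nondecreasing family). -/
def mcover {X : Type*} [MetricSpace X] (f : X → X) (Z : Set X) (α ε : ℝ) :
    ℝ≥0∞ :=
  ⨆ N : ℕ, Mcover f Z α ε N

/-- Pesin–Pitskel (Bowen) topological entropy of `Z` at scale `ε`. -/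
def htopScale {X : Type*} [MetricSpace X] (f : X → X) (Z : Set X) (ε : ℝ) : ℝ :=
  sInf {α : ℝ | mcover f Z α ε = 0}

section BowenBall

variable {X : Type*} [MetricSpace X] {f : X → X}

lemma isOpen_bowenBall (hf : Continuous f) (n : ℕ) (x : X) (ε : ℝ) :
    IsOpen (bowenBall f n x ε) := by
  have : bowenBall f n x ε = ⋂ j ∈ Set.Iio n, f^[j] ⁻¹' Metric.ball (f^[j] x) ε := by
    ext y
    simp [bowenBall, Metric.mem_ball, dist_comm]
  rw [this]
  exact (Set.finite_Iio n).isOpen_biInter fun j _ => Metric.isOpen_ball.preimage (hf.iterate j)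

lemma mem_bowenBall_of_center_eq {ε : ℝ} {center : X → X}
    (hcenter : ∀ y, dist y (center y) < ε / 2) {n : ℕ} {x y : X}
    (hxy : ∀ j < n, center (f^[j] x) = center (f^[j] y)) : y ∈ bowenBall f n x ε := by
  intro j hj
  calc dist (f^[j] x) (f^[j] y)
      ≤ dist (f^[j] x) (center (f^[j] x)) + dist (center (f^[j] x)) (f^[j] y) :=
        dist_triangle _ _ _
    _ < ε / 2 + ε / 2 := by
        have hy := hcenter (f^[j] y)
        rw [← hxy j hj, dist_comm] at hy
        exact add_lt_add (hcenter _) hy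
    _ = ε := add_halves ε

/-- Covers by `m ^ n` Bowen balls of length `n`, where `m` is the size of an `ε/2`-net. -/
lemma exists_finset_bowenBall_cover [CompactSpace X] [Nonempty X] (f : X → X) {ε : ℝ}
    (hε : 0 < ε) : ∃ m : ℕ, ∀ n, ∃ C : Finset X, C.card ≤ m ^ n ∧
      ∀ y, ∃ x ∈ C, y ∈ bowenBall f n x ε := by
  classical
  obtain ⟨t, -, ht, hcover⟩ := (isCompact_univ (X := X)).finite_cover_balls (half_pos hε)
  have hcenter : ∀ y : X, ∃ c ∈ ht.toFinset, dist y c < ε / 2 := fun y => by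
    simpa using hcover (Set.mem_univ y)
  choose center hcenter_mem hcenter_dist using hcenter
  refine ⟨ht.toFinset.card, fun n => ?_⟩
  let itinerary : X → Fin n → X := fun y j => center (f^[j] y)
  let words := Fintype.piFinset fun _ : Fin n => ht.toFinset
  refine ⟨words.image (Function.invFun itinerary), ?_, fun y => ?_⟩
  · exact Finset.card_image_le.trans (by simp [words])
  · refine ⟨Function.invFun itinerary (itinerary y),
      Finset.mem_image_of_mem _ (Fintype.mem_piFinset.2 fun j => hcenter_mem _), ?_⟩
    have hsame := Function.invFun_eq (f := itinerary) ⟨y, rfl⟩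
    exact mem_bowenBall_of_center_eq hcenter_dist fun j hj => congrFun hsame ⟨j, hj⟩

end BowenBall

section Cover

variable {X : Type*} [MetricSpace X] {f : X → X} {Z : Set X} {α ε : ℝ} {N : ℕ}

lemma Mcover_le_card_mul_of_finset_cover {C : Finset X} {n : ℕ} (hn : N ≤ n)
    (hC : ∀ y ∈ Z, ∃ x ∈ C, y ∈ bowenBall f n x ε) :
    Mcover f Z α ε N ≤ C.card * ENNReal.ofReal (Real.exp (-α * n)) := by
  classical
  let D : Finset (X × ℕ) := C.image (·, n)
  refine sInf_le ⟨D, D.countable_toSet, ?_, fun y hy => ?_, ?_⟩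
  · simp [D, hn]
  · obtain ⟨x, hx, hy⟩ := hC y hy
    exact Set.mem_biUnion (by simp [D, hx] : ((x, n) : X × ℕ) ∈ (D : Set (X × ℕ))) hy
  · refine Eq.trans ?_ (Finset.tsum_subtype D fun p => ENNReal.ofReal (Real.exp (-α * p.2))).symm
    simp [D, Finset.sum_image]

lemma exists_mcover_eq_zero [CompactSpace X] [Nonempty X] (f : X → X) (Z : Set X)
    (hε : 0 < ε) : ∃ α, mcover f Z α ε = 0 := by
  obtain ⟨m, hm⟩ := exists_finset_bowenBall_cover f hε
  refine ⟨Real.log (m + 1) + 1, ENNReal.iSup_eq_zero.2 fun N => ?_⟩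
  have hbound : ∀ n ≥ N, Mcover f Z (Real.log (m + 1) + 1) ε N ≤
      ENNReal.ofReal (Real.exp (-n)) := fun n hn => by
    obtain ⟨C, hcard, hC⟩ := hm n
    refine (Mcover_le_card_mul_of_finset_cover hn fun y _ => hC y).trans ?_
    have hpow : ((m : ℝ) + 1) ^ n = Real.exp (n * Real.log (m + 1)) := by
      rw [Real.exp_nat_mul, Real.exp_log (by positivity)]
    calc (C.card : ℝ≥0∞) * ENNReal.ofReal (Real.exp (-(Real.log (m + 1) + 1) * n))
        ≤ ENNReal.ofReal (((m : ℝ) + 1) ^ n) *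
            ENNReal.ofReal (Real.exp (-(Real.log (m + 1) + 1) * n)) := by
          rw [ENNReal.ofReal_pow (by positivity)]
          gcongr
          exact_mod_cast hcard.trans (Nat.pow_le_pow_left (Nat.le_succ m) n)
      _ = ENNReal.ofReal (Real.exp (-n)) := by
          rw [← ENNReal.ofReal_mul (by positivity), hpow, ← Real.exp_add]
          ring_nf
  have hlim : Tendsto (fun n : ℕ => ENNReal.ofReal (Real.exp (-n))) atTop (nhds 0) := by
    simpa using ENNReal.tendsto_ofReal
      (Real.tendsto_exp_neg_atTop_nhds_zero.comp tendsto_natCast_atTop_atTop)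
  exact nonpos_iff_eq_zero.1 (ge_of_tendsto hlim (eventually_atTop.2 ⟨N, hbound⟩))

end Cover

lemma MeasureTheory.ProbabilityMeasure.measure_le_limsup_of_mapClusterPt {X ι : Type*}
    [TopologicalSpace X] [HasOuterApproxClosed X] [MeasurableSpace X] [OpensMeasurableSpace X]
    {l : Filter ι} {μ : ι → ProbabilityMeasure X} {ν : ProbabilityMeasure X}
    (hν : MapClusterPt ν l μ) {U : Set X} (hU : IsOpen U) :
    (ν : Measure X) U ≤ l.limsup fun k => (μ k : Measure X) U := by
  obtain ⟨u, hul, hu⟩ := mapClusterPt_iff_ultrafilter.1 hν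
  calc (ν : Measure X) U ≤ (u : Filter ι).liminf fun k => (μ k : Measure X) U :=
        ProbabilityMeasure.le_liminf_measure_open_of_tendsto hu hU
    _ ≤ (u : Filter ι).limsup fun k => (μ k : Measure X) U := liminf_le_limsup
    _ ≤ l.limsup fun k => (μ k : Measure X) U := limsup_le_limsup_of_le hul

lemma measure_le_ofReal_mul_Mcover {X : Type*} [MetricSpace X] [MeasurableSpace X]
    [BorelSpace X] {f : X → X} (hf : Continuous f) {Z : Set X} {ε s α K : ℝ} (hK : 0 < K)
    (hα : α ≤ s) {N : ℕ} {μ : ℕ → ProbabilityMeasure X}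
    (hlim : ∀ (x : X) (n : ℕ), N ≤ n → (bowenBall f n x ε ∩ Z).Nonempty →
      atTop.limsup (fun k : ℕ => (μ k : Measure X) (bowenBall f n x ε))
        ≤ ENNReal.ofReal (K * Real.exp (-(n : ℝ) * s)))
    {ν : ProbabilityMeasure X} (hν : MapClusterPt ν atTop μ) :
    (ν : Measure X) Z ≤ ENNReal.ofReal K * Mcover f Z α ε N := by
  have hK₀ : ENNReal.ofReal K ≠ 0 := ENNReal.ofReal_pos.2 hK |>.ne'
  rw [← ENNReal.div_le_iff' hK₀ ENNReal.ofReal_ne_top]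
  refine le_sInf ?_
  rintro _ ⟨C, hCcount, hlen, hcover, rfl⟩
  rw [ENNReal.div_le_iff' hK₀ ENNReal.ofReal_ne_top, ← ENNReal.tsum_mul_left]
  -- `hlim` only controls the balls that meet `Z`.
  let C' : Set (X × ℕ) := {p ∈ C | (bowenBall f p.2 p.1 ε ∩ Z).Nonempty}
  have hcover' : Z ⊆ ⋃ p ∈ C', bowenBall f p.2 p.1 ε := fun y hy => by
    obtain ⟨p, hp, hyp⟩ := Set.mem_iUnion₂.1 (hcover hy)
    exact Set.mem_biUnion ⟨hp, y, hyp, hy⟩ hyp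
  have hball : ∀ p ∈ C', (ν : Measure X) (bowenBall f p.2 p.1 ε) ≤
      ENNReal.ofReal K * ENNReal.ofReal (Real.exp (-α * p.2)) := by
    rintro ⟨x, n⟩ ⟨hpC, hmeets⟩
    refine ((ProbabilityMeasure.measure_le_limsup_of_mapClusterPt hν
      (isOpen_bowenBall hf n x ε)).trans (hlim x n (hlen _ hpC) hmeets)).trans ?_
    rw [← ENNReal.ofReal_mul hK.le]
    refine ENNReal.ofReal_le_ofReal (mul_le_mul_of_nonneg_left (Real.exp_le_exp.2 ?_) hK.le)
    nlinarith [(Nat.cast_nonneg n : (0 : ℝ) ≤ n)]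
  calc (ν : Measure X) Z ≤ ∑' p : C', (ν : Measure X) (bowenBall f p.1.2 p.1.1 ε) :=
        (measure_mono hcover').trans (measure_biUnion_le _ (hCcount.mono fun _ hp => hp.1) _)
    _ ≤ ∑' p : C', ENNReal.ofReal K * ENNReal.ofReal (Real.exp (-α * p.1.2)) :=
        ENNReal.tsum_le_tsum fun p => hball p p.2
    _ ≤ ∑' p : C, ENNReal.ofReal K * ENNReal.ofReal (Real.exp (-α * p.1.2)) :=
        ENNReal.tsum_mono_subtype
          (fun p : X × ℕ => ENNReal.ofReal K * ENNReal.ofReal (Real.exp (-α * p.2)))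
          fun _ hp => hp.1

theorem stmt10_general {X : Type*} [MetricSpace X] [CompactSpace X]
    [MeasurableSpace X] [BorelSpace X]
    (f : X → X) (hf : Continuous f) (Z : Set X)
    (ε : ℝ) (hε : 0 < ε) (s : ℝ)
    (μ : ℕ → ProbabilityMeasure X) (K : ℝ) (hK : 0 < K) (N : ℕ)
    (hlim : ∀ (x : X) (n : ℕ), N ≤ n → (bowenBall f n x ε ∩ Z).Nonempty →
      Filter.atTop.limsup (fun k : ℕ => (μ k : Measure X) (bowenBall f n x ε))
        ≤ ENNReal.ofReal (K * Real.exp (-(n : ℝ) * s)))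
    (ν : ProbabilityMeasure X) (hν : MapClusterPt ν atTop μ)
    (hνZ : 0 < (ν : Measure X) Z) :
    s ≤ htopScale f Z ε := by
  have : Nonempty X := ν.nonempty
  refine le_csInf (exists_mcover_eq_zero f Z hε) fun α hα => ?_
  by_contra! hαs
  have hM : Mcover f Z α ε N = 0 := ENNReal.iSup_eq_zero.1 hα N
  have hνZ_le := measure_le_ofReal_mul_Mcover hf hK hαs.le hlim hν
  rw [hM, mul_zero] at hνZ_le
  exact hνZ.ne' (nonpos_iff_eq_zero.1 hνZ_le)

/-- Entropy Distribution Principle: if probability measures `μ_k`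
satisfy `limsup_k μ_k(B_n(x,ε)) ≤ K e^{−ns}` for all Bowen balls meeting `Z` with
`n ≥ N`, and some weak-* cluster point `ν` of `(μ_k)` has `ν(Z) > 0`, then
`h_top(Z,ε) ≥ s`. -/
theorem stmt10 {X : Type*} [MetricSpace X] [CompactSpace X]
    [MeasurableSpace X] [BorelSpace X]
    (f : X → X) (hf : Continuous f) (Z : Set X) (hZ : MeasurableSet Z)
    (ε : ℝ) (hε : 0 < ε) (s : ℝ) (hs : 0 ≤ s)
    (μ : ℕ → ProbabilityMeasure X) (K : ℝ) (hK : 0 < K) (N : ℕ)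
    (hlim : ∀ (x : X) (n : ℕ), N ≤ n → (bowenBall f n x ε ∩ Z).Nonempty →
      Filter.atTop.limsup (fun k : ℕ => (μ k : Measure X) (bowenBall f n x ε))
        ≤ ENNReal.ofReal (K * Real.exp (-(n : ℝ) * s)))
    (ν : ProbabilityMeasure X) (hν : MapClusterPt ν atTop μ)
    (hνZ : 0 < (ν : Measure X) Z) :
    s ≤ htopScale f Z ε :=
  stmt10_general f hf Z ε hε s μ K hK N hlim ν hν hνZ

end
end
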